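/- Let G be a finite property graph, let ℓ be an edge label, and let A be a nonempty attribute set. Let p = ⟨A₀, ℓ₀, …, ℓ_{n−1}, A_n⟩ be a simple path pattern of length n and let 1 ≤ i ≤ n be an index such that A_{i−1} = A and ℓ_{i−1} = ℓ (i.e., p has the form ⟨…, ℓ_{i−2}, A, ℓ, A_i, …⟩). Then the number of vertices matching p satisfies |V(p)| ≤ |V(A, ℓ)| · d_m^{i−1}, where d_m is the maximum in-degree in G. -/

import Mathlib

/-- A property graph: directed edges labeled by `L`, vertices carrying attribute sets over `Att`. -/
structure PropertyGraph (V L Att : Type) where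
  E : Set (V × L × V)
  attr : V → Set Att

/-- A simple path pattern of length `n`: `n+1` nonempty attribute sets and `n` edge labels. -/
structure PathPattern (L Att : Type) (n : ℕ) where
  A : Fin (n + 1) → Set Att
  A_nonempty : ∀ i, (A i).Nonempty
  lab : Fin n → L

namespace PropertyGraph

variable {V L Att : Type}

/-- Vertex `s` matches pattern `p` if it is the source of a path matching `p`. -/
def Matches (G : PropertyGraph V L Att) {n : ℕ} (p : PathPattern L Att n) (s : V) : Prop :=
  ∃ v : Fin (n + 1) → V,
    v 0 = s ∧
    (∀ i : Fin n, (v i.castSucc, p.lab i, v i.succ) ∈ G.E) ∧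
    (∀ i : Fin (n + 1), p.A i ⊆ G.attr (v i))

/-- `V(p)`: the set of vertices matching pattern `p`. -/
def Vmatch (G : PropertyGraph V L Att) {n : ℕ} (p : PathPattern L Att n) : Set V :=
  {s | G.Matches p s}

/-- `E(A, ℓ)`: edges with label `l` whose target's attribute set covers `S`. -/
def edgesTo (G : PropertyGraph V L Att) (S : Set Att) (l : L) : Set (V × L × V) :=
  {e ∈ G.E | e.2.1 = l ∧ S ⊆ G.attr e.2.2}

/-- `V(A, ℓ)`: vertices whose attribute set covers `S` having an outgoing `l`-labeled edge. -/
def srcVerts (G : PropertyGraph V L Att) (S : Set Att) (l : L) : Set V :=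
  {v | S ⊆ G.attr v ∧ ∃ w, (v, l, w) ∈ G.E}

/-- In-degree of a vertex `w`. -/
noncomputable def inDeg (G : PropertyGraph V L Att) (w : V) : ℕ :=
  {e ∈ G.E | e.2.2 = w}.ncard

/-- `d_m`: the maximum in-degree over all vertices. -/
noncomputable def maxInDeg (G : PropertyGraph V L Att) [Fintype V] : ℕ :=
  Finset.univ.sup fun w => G.inDeg w

/-- Vertex `s` matches the reachability path pattern `⟨A₀, l*, A₁⟩`. -/
def ReachMatches (G : PropertyGraph V L Att) (A₀ A₁ : Set Att) (l : L) (s : V) : Prop :=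
  ∃ n : ℕ, 1 ≤ n ∧ ∃ v : Fin (n + 1) → V,
    v 0 = s ∧
    (∀ i : Fin n, (v i.castSucc, l, v i.succ) ∈ G.E) ∧
    A₀ ⊆ G.attr s ∧ A₁ ⊆ G.attr (v (Fin.last n))

/-- The set of vertices matching the reachability path pattern `⟨A₀, l*, A₁⟩`. -/
def VreachMatch (G : PropertyGraph V L Att) (A₀ A₁ : Set Att) (l : L) : Set V :=
  {s | G.ReachMatches A₀ A₁ l s}

end PropertyGraph

/-!
A vertex matching `p` is the start of a witness path whose first `i - 1` steps form a walk
along the labels `ℓ₀, …, ℓ_{i-2}` ending in `V(A, ℓ)`, and it is recovered from that walk as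
its first vertex. Such walks are counted from their last vertex backwards: each step prepends
the source of an edge into the current first vertex, one of at most `d_m` choices, so there are
at most `|V(A, ℓ)| · d_m ^ (i - 1)` of them.
-/

theorem Set.ncard_le_mul_ncard_of_mapsTo {α β : Type*} {s : Set α} {t : Set β} {f : α → β}
    (ht : t.Finite) (hf : Set.MapsTo f s t) (n : ℕ) (hn : ∀ b ∈ t, (s ∩ f ⁻¹' {b}).ncard ≤ n) :
    s.ncard ≤ n * t.ncard := by
  classical
  obtain hs | hs := s.finite_or_infinite
  · obtain ⟨s, rfl⟩ := hs.exists_finset_coe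
    obtain ⟨t, rfl⟩ := ht.exists_finset_coe
    rw [Set.ncard_coe_finset, Set.ncard_coe_finset]
    refine Finset.card_le_mul_card_image_of_maps_to (fun a ha => hf ha) n fun b hb => ?_
    rw [← Set.ncard_coe_finset, Finset.coe_filter]
    exact hn b hb
  · rw [hs.ncard]
    exact Nat.zero_le _

namespace PropertyGraph

variable {V L Att : Type} (G : PropertyGraph V L Att)

def walksEndingIn {k : ℕ} (lb : Fin k → L) (T : Set V) : Set (Fin (k + 1) → V) :=
  {w | (∀ j : Fin k, (w j.castSucc, lb j, w j.succ) ∈ G.E) ∧ w (Fin.last k) ∈ T}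

theorem inDeg_le_maxInDeg [Fintype V] (w : V) : G.inDeg w ≤ G.maxInDeg :=
  Finset.le_sup (f := G.inDeg) (Finset.mem_univ w)

theorem mapsTo_tail_walksEndingIn {k : ℕ} (lb : Fin (k + 1) → L) (T : Set V) :
    Set.MapsTo Fin.tail (G.walksEndingIn lb T) (G.walksEndingIn (Fin.tail lb) T) :=
  fun _ ⟨hE, hT⟩ => ⟨fun j => hE j.succ, hT⟩

theorem ncard_walksEndingIn_fiber_tail_le [Finite V] [Finite L] {k : ℕ} (lb : Fin (k + 1) → L)
    (T : Set V) (u : Fin (k + 1) → V) :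
    (G.walksEndingIn lb T ∩ Fin.tail ⁻¹' {u}).ncard ≤ G.inDeg (u 0) := by
  refine Set.ncard_le_ncard_of_injOn (fun w => (w 0, lb 0, u 0)) ?_ ?_ (Set.toFinite _)
  · rintro w ⟨⟨hE, -⟩, rfl : Fin.tail w = u⟩
    exact ⟨hE 0, rfl⟩
  · rintro w ⟨-, hw : Fin.tail w = u⟩ w' ⟨-, hw' : Fin.tail w' = u⟩ h
    have h0 : w 0 = w' 0 := congrArg Prod.fst h
    exact funext (Fin.cases h0 (congrFun (hw.trans hw'.symm)))

theorem ncard_walksEndingIn_le [Fintype V] [Finite L] {k : ℕ} (lb : Fin k → L) (T : Set V) :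
    (G.walksEndingIn lb T).ncard ≤ T.ncard * G.maxInDeg ^ k := by
  induction k with
  | zero =>
    rw [pow_zero, mul_one]
    refine Set.ncard_le_ncard_of_injOn (fun w => w (Fin.last 0)) (fun w hw => hw.2) ?_
      (Set.toFinite _)
    intro w _ w' _ h
    funext j
    rwa [show j = Fin.last 0 from Fin.ext (by omega)]
  | succ k ih =>
    calc (G.walksEndingIn lb T).ncard
        ≤ G.maxInDeg * (G.walksEndingIn (Fin.tail lb) T).ncard :=
          Set.ncard_le_mul_ncard_of_mapsTo (Set.toFinite _) (G.mapsTo_tail_walksEndingIn lb T) _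
            fun u _ => (G.ncard_walksEndingIn_fiber_tail_le lb T u).trans (G.inDeg_le_maxInDeg _)
      _ ≤ G.maxInDeg * (T.ncard * G.maxInDeg ^ k) := Nat.mul_le_mul_left _ (ih _)
      _ = T.ncard * G.maxInDeg ^ (k + 1) := by ring

theorem Vmatch_subset_image_walksEndingIn {n k : ℕ} (hk : k < n) {l : L} {S : Set Att}
    {p : PathPattern L Att n} (hA : p.A ⟨k, by omega⟩ = S) (hlab : p.lab ⟨k, hk⟩ = l) :
    G.Vmatch p ⊆ (· 0) '' G.walksEndingIn (fun j : Fin k => p.lab (Fin.castLE hk.le j))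
      (G.srcVerts S l) := by
  rintro _ ⟨v, rfl, hE, hattr⟩
  refine ⟨fun j => v (Fin.castLE (by omega) j), ⟨fun j => hE (Fin.castLE hk.le j), ?_, ?_⟩, rfl⟩
  · exact hA ▸ hattr _
  · exact ⟨v ⟨k + 1, by omega⟩, hlab ▸ hE ⟨k, hk⟩⟩

end PropertyGraph

open PropertyGraph in
/-- For a pattern of the form ⟨…, ℓ_{i−2}, A, ℓ, A_i, …⟩ with 1 ≤ i ≤ n,
|V(p)| ≤ |V(A,ℓ)| · d_m^(i−1). -/
theorem bound_by_srcVerts {V L Att : Type} [Fintype V] [Fintype L] (G : PropertyGraph V L Att)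
    {n i : ℕ} (hi1 : 1 ≤ i) (hin : i ≤ n)
    (l : L) (S : Set Att)
    (p : PathPattern L Att n)
    (hA : p.A ⟨i - 1, by omega⟩ = S)
    (hlab : p.lab ⟨i - 1, by omega⟩ = l) :
    (G.Vmatch p).ncard ≤ (G.srcVerts S l).ncard * G.maxInDeg ^ (i - 1) := by
  have hk : i - 1 < n := by omega
  calc (G.Vmatch p).ncard
      ≤ ((· 0) '' G.walksEndingIn (fun j : Fin (i - 1) => p.lab (Fin.castLE hk.le j))
          (G.srcVerts S l)).ncard :=
        Set.ncard_le_ncard (G.Vmatch_subset_image_walksEndingIn hk hA hlab) (Set.toFinite _)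
    _ ≤ (G.walksEndingIn _ (G.srcVerts S l)).ncard := Set.ncard_image_le (Set.toFinite _)
    _ ≤ _ := G.ncard_walksEndingIn_le _ _
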